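/- Let s := (20 + √57)^{1/3} and β2 := (s + 7/s)/√21. Then β2²·(β2² − 1)² = 4q², where q := 20/(21√21). Consequently, the functions x ↦ cos(β2·x) and x ↦ sin(β2·x) satisfy the sixth-order linear ordinary differential equation f⁽⁶⁾ + 2f⁽⁴⁾ + f'' + 4q²·f = 0 on ℝ. -/

import Mathlib

/-!
By Cardano, `t := s + 7 / s` is the real root of `t³ = 21 t + 40`, so `t (t² - 21) = 40`; since
`β2² = t² / 21` this gives `β2² (β2² - 1)² = 1600 / 21³ = 4 q²`. Each second derivative multiplies
`cos (β2 x)` and `sin (β2 x)` by `-β2²`, so the ODE reduces to the value `-β2² (β2² - 1)² + 4 q²` of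
its characteristic polynomial at `iβ2`, which vanishes.
-/

open Real

noncomputable def q : ℝ := 20 / (21 * Real.sqrt 21)

noncomputable def s : ℝ := (20 + Real.sqrt 57) ^ ((1 : ℝ) / 3)

noncomputable def β2 : ℝ := (s + 7 / s) / Real.sqrt 21

theorem iteratedDeriv_two_mul_cos_mul (b : ℝ) (n : ℕ) (x : ℝ) :
    iteratedDeriv (2 * n) (fun y => cos (b * y)) x = (-b ^ 2) ^ n * cos (b * x) := by
  rw [iteratedDeriv_comp_const_mul contDiff_cos, iteratedDeriv_even_cos]
  simp only [Pi.mul_apply, Pi.pow_apply, Pi.neg_apply, Pi.one_apply]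
  ring

theorem iteratedDeriv_two_mul_sin_mul (b : ℝ) (n : ℕ) (x : ℝ) :
    iteratedDeriv (2 * n) (fun y => sin (b * y)) x = (-b ^ 2) ^ n * sin (b * x) := by
  rw [iteratedDeriv_comp_const_mul contDiff_sin, iteratedDeriv_even_sin]
  simp only [Pi.mul_apply, Pi.pow_apply, Pi.neg_apply, Pi.one_apply]
  ring

theorem sixth_order_ode_of_iteratedDeriv_two_mul {f : ℝ → ℝ} {b : ℝ}
    (hf : ∀ n x, iteratedDeriv (2 * n) f x = (-b ^ 2) ^ n * f x) (x : ℝ) :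
    iteratedDeriv 6 f x + 2 * iteratedDeriv 4 f x + iteratedDeriv 2 f x
      + b ^ 2 * (b ^ 2 - 1) ^ 2 * f x = 0 := by
  rw [hf 3, hf 2, hf 1]
  ring

/-- Cardano's substitution; `u² - 2 a u + p³` is the resolvent of `t³ = 3 p t + 2 a`. -/
theorem add_div_cube_of_cube_root_resolvent {s a p : ℝ} (hs : s ≠ 0)
    (h : (s ^ 3) ^ 2 - 2 * a * s ^ 3 + p ^ 3 = 0) :
    (s + p / s) ^ 3 = 3 * p * (s + p / s) + 2 * a := by
  field_simp
  linear_combination h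

theorem s_pos : 0 < s := by
  unfold s
  positivity

theorem s_cube : s ^ 3 = 20 + √57 := by
  rw [s, ← rpow_natCast, ← rpow_mul (by positivity)]
  norm_num

theorem s_add_seven_div_s_cube : (s + 7 / s) ^ 3 = 21 * (s + 7 / s) + 40 := by
  have h57 : √57 ^ 2 = 57 := sq_sqrt (by norm_num)
  have hresolvent : (s ^ 3) ^ 2 - 2 * 20 * s ^ 3 + 7 ^ 3 = 0 := by
    rw [s_cube]
    linear_combination h57
  linear_combination add_div_cube_of_cube_root_resolvent s_pos.ne' hresolvent

theorem β2_sq_mul_sq_sub_one_sq : β2 ^ 2 * (β2 ^ 2 - 1) ^ 2 = 4 * q ^ 2 := by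
  have h21 : √21 ^ 2 = 21 := sq_sqrt (by norm_num)
  have hβ : β2 ^ 2 = (s + 7 / s) ^ 2 / 21 := by rw [β2, div_pow, h21]
  have hq : q ^ 2 = 400 / 9261 := by
    rw [q, div_pow, mul_pow, h21]
    norm_num
  rw [hβ, hq]
  linear_combination
    ((s + 7 / s) ^ 3 - 21 * (s + 7 / s) + 40) / 9261 * s_add_seven_div_s_cube

/-- β2²·(β2² − 1)² = 4q², and consequently cos(β2·x) and sin(β2·x)
solve the sixth-order ODE f⁽⁶⁾ + 2f⁽⁴⁾ + f'' + 4q²·f = 0 on ℝ. -/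
theorem stmt_14 :
    β2 ^ 2 * (β2 ^ 2 - 1) ^ 2 = 4 * q ^ 2 ∧
    (∀ x : ℝ,
      iteratedDeriv 6 (fun y => Real.cos (β2 * y)) x
        + 2 * iteratedDeriv 4 (fun y => Real.cos (β2 * y)) x
        + iteratedDeriv 2 (fun y => Real.cos (β2 * y)) x
        + 4 * q ^ 2 * Real.cos (β2 * x) = 0) ∧
    (∀ x : ℝ,
      iteratedDeriv 6 (fun y => Real.sin (β2 * y)) x
        + 2 * iteratedDeriv 4 (fun y => Real.sin (β2 * y)) x
        + iteratedDeriv 2 (fun y => Real.sin (β2 * y)) x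
        + 4 * q ^ 2 * Real.sin (β2 * x) = 0) := by
  refine ⟨β2_sq_mul_sq_sub_one_sq, fun x => ?_, fun x => ?_⟩
  · rw [← β2_sq_mul_sq_sub_one_sq]
    exact sixth_order_ode_of_iteratedDeriv_two_mul (iteratedDeriv_two_mul_cos_mul β2) x
  · rw [← β2_sq_mul_sq_sub_one_sq]
    exact sixth_order_ode_of_iteratedDeriv_two_mul (iteratedDeriv_two_mul_sin_mul β2) x
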